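/- (Recovery of Ben-David et al.'s bound.) Let $\mathcal{X}^s = \mathcal{X}^t = \mathcal{X}$, $T_{ts} = \mathrm{id}$, and consider hypotheses $h: \mathcal{X} \to \{-1,1\}$ with loss $\ell(y,h(x)) = \frac{1}{2}|y - h(x)|$ (the 0-1 loss taking values in $\{0,1\}$). Then for any hypothesis $h$, $|R^t(h) - R^s(h)| \le \mathrm{TV}(\mathbb{P}^s, \mathbb{P}^t) + \min\{ \mathbb{E}_{\mathbb{P}^t}[\|p^t(\cdot\mid x) - p^s(\cdot\mid x)\|_1],\ \mathbb{E}_{\mathbb{P}^s}[\|p^t(\cdot\mid x) - p^s(\cdot\mid x)\|_1] \}$, where $\mathrm{TV}$ is the total variation distance and $\|\cdot\|_1$ sums absolute differences over $y \in \{-1,1\}$. -/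
import Mathlib


open MeasureTheory Set

/-- Expected risk: sum over labels y ∈ {-1,1} of ∫ ℓ(y, h(x)) p(y|x) dP(x). -/
noncomputable def risk {X : Type*} [MeasurableSpace X] (ℓ : ℤ → ℝ → ℝ)
    (h : X → ℝ) (p : X → ℤ → ℝ) (P : Measure X) : ℝ :=
  ∫ x, (ℓ 1 (h x) * p x 1 + ℓ (-1) (h x) * p x (-1)) ∂P

/-- Total variation distance: `sup_A |P(A) - Q(A)|` over measurable sets `A`. -/
noncomputable def TV {X : Type*} [MeasurableSpace X] (P Q : Measure X) : ℝ :=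
  sSup {r | ∃ A : Set X, MeasurableSet A ∧ r = |(P A).toReal - (Q A).toReal|}

lemma toReal_prob_le_one {X : Type*} [MeasurableSpace X] (P : Measure X)
    [IsProbabilityMeasure P] (A : Set X) : (P A).toReal ≤ 1 := by
  have := prob_le_one (μ := P) (s := A)
  have h := ENNReal.toReal_mono (by simp) this
  simpa using h

lemma le_TV {X : Type*} [MeasurableSpace X] (P Q : Measure X)
    [IsProbabilityMeasure P] [IsProbabilityMeasure Q] {A : Set X}
    (hA : MeasurableSet A) : |(P A).toReal - (Q A).toReal| ≤ TV P Q := by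
  apply le_csSup
  · refine ⟨1, ?_⟩
    rintro r ⟨B, hB, rfl⟩
    have h1 := toReal_prob_le_one P B
    have h2 := toReal_prob_le_one Q B
    have h3 : (0:ℝ) ≤ (P B).toReal := ENNReal.toReal_nonneg
    have h4 : (0:ℝ) ≤ (Q B).toReal := ENNReal.toReal_nonneg
    rw [abs_sub_le_iff]; constructor <;> linarith
  · exact ⟨A, hA, rfl⟩

lemma key {X : Type*} [MeasurableSpace X] (P Q : Measure X)
    [IsProbabilityMeasure P] [IsProbabilityMeasure Q] (f : X → ℝ)
    (hf : Measurable f) (h0 : ∀ x, 0 ≤ f x) (h1 : ∀ x, f x ≤ 1) :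
    |∫ x, f x ∂P - ∫ x, f x ∂Q| ≤ TV P Q := by
  have hint : ∀ (μ : Measure X) [IsProbabilityMeasure μ], Integrable f μ := by
    intro μ _
    refine Integrable.mono' (integrable_const 1) hf.aestronglyMeasurable ?_
    filter_upwards with x
    rw [Real.norm_eq_abs, abs_le]; exact ⟨by linarith [h0 x], h1 x⟩
  set gP : ℝ → ℝ := fun t => (P {a | t ≤ f a}).toReal with hgP
  set gQ : ℝ → ℝ := fun t => (Q {a | t ≤ f a}).toReal with hgQ
  have hrwP : ∫ x, f x ∂P = ∫ t in Ioc (0:ℝ) 1, gP t :=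
    (hint P).integral_eq_integral_Ioc_meas_le (Filter.Eventually.of_forall h0)
      (Filter.Eventually.of_forall h1)
  have hrwQ : ∫ x, f x ∂Q = ∫ t in Ioc (0:ℝ) 1, gQ t :=
    (hint Q).integral_eq_integral_Ioc_meas_le (Filter.Eventually.of_forall h0)
      (Filter.Eventually.of_forall h1)
  have hmeas : ∀ (μ : Measure X), Measurable (fun t => (μ {a | t ≤ f a}).toReal) := by
    intro μ
    have hanti : Antitone (fun t : ℝ => μ {a | t ≤ f a}) :=
      fun s t hst => measure_mono (fun a ha => le_trans hst ha)
    exact hanti.measurable.ennreal_toReal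
  have hintOn : ∀ (μ : Measure X) [IsProbabilityMeasure μ],
      IntegrableOn (fun t => (μ {a | t ≤ f a}).toReal) (Ioc (0:ℝ) 1) := by
    intro μ _
    refine Measure.integrableOn_of_bounded (by simp) (hmeas μ).aestronglyMeasurable
      (M := 1) ?_
    filter_upwards with t
    rw [Real.norm_eq_abs, abs_of_nonneg ENNReal.toReal_nonneg]
    exact toReal_prob_le_one μ _
  rw [hrwP, hrwQ, ← integral_sub (hintOn P) (hintOn Q)]
  calc |∫ t in Ioc (0:ℝ) 1, (gP t - gQ t)|
      ≤ ∫ t in Ioc (0:ℝ) 1, |gP t - gQ t| := by simpa [Real.norm_eq_abs] using norm_integral_le_integral_norm (fun t => gP t - gQ t)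
    _ ≤ ∫ t in Ioc (0:ℝ) 1, TV P Q := by
        refine integral_mono ((hintOn P).sub (hintOn Q)).abs (integrable_const _) ?_
        intro t
        exact le_TV P Q (measurableSet_le measurable_const hf)
    _ = TV P Q := by simp

lemma TV_symm {X : Type*} [MeasurableSpace X] (P Q : Measure X) : TV P Q = TV Q P := by
  unfold TV
  congr 1
  ext r
  constructor <;> rintro ⟨A, hA, rfl⟩ <;> exact ⟨A, hA, abs_sub_comm _ _⟩

theorem stmt5
    {X : Type*} [MeasurableSpace X]
    (Ps Pt : Measure X) [IsProbabilityMeasure Ps] [IsProbabilityMeasure Pt]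
    (ps pt : X → ℤ → ℝ)
    (hpsmeas : ∀ y, Measurable fun x => ps x y)
    (hptmeas : ∀ y, Measurable fun x => pt x y)
    (hpsnonneg : ∀ x y, 0 ≤ ps x y) (hptnonneg : ∀ x y, 0 ≤ pt x y)
    (hpssum : ∀ x, ps x 1 + ps x (-1) = 1) (hptsum : ∀ x, pt x 1 + pt x (-1) = 1)
    (h : X → ℝ) (hh : Measurable h) (hval : ∀ x, h x = 1 ∨ h x = -1) :
    |risk (fun y r => |(y : ℝ) - r| / 2) h pt Pt
      - risk (fun y r => |(y : ℝ) - r| / 2) h ps Ps| ≤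
    TV Ps Pt +
      min (∫ x, (|pt x 1 - ps x 1| + |pt x (-1) - ps x (-1)|) ∂Pt)
          (∫ x, (|pt x 1 - ps x 1| + |pt x (-1) - ps x (-1)|) ∂Ps) := by
  set ft : X → ℝ := fun x => |(1:ℝ) - h x| / 2 * pt x 1 + |(-1:ℝ) - h x| / 2 * pt x (-1)
    with hft
  set fs : X → ℝ := fun x => |(1:ℝ) - h x| / 2 * ps x 1 + |(-1:ℝ) - h x| / 2 * ps x (-1)
    with hfs
  have hriskT : risk (fun y r => |(y : ℝ) - r| / 2) h pt Pt = ∫ x, ft x ∂Pt := by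
    simp only [risk, hft]; norm_num
  have hriskS : risk (fun y r => |(y : ℝ) - r| / 2) h ps Ps = ∫ x, fs x ∂Ps := by
    simp only [risk, hfs]; norm_num
  -- case analysis on h x
  have hcases : ∀ x, (ft x = pt x (-1) ∧ fs x = ps x (-1)) ∨
      (ft x = pt x 1 ∧ fs x = ps x 1) := by
    intro x
    rcases hval x with hx | hx <;> [left; right] <;>
      constructor <;> simp [hft, hfs, hx] <;> norm_num
  have hple : ∀ (p : X → ℤ → ℝ), (∀ x y, 0 ≤ p x y) → (∀ x, p x 1 + p x (-1) = 1) →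
      ∀ x y, y = 1 ∨ y = -1 → p x y ≤ 1 := by
    intro p hnn hsum x y hy
    rcases hy with rfl | rfl
    · linarith [hnn x (-1), hsum x]
    · linarith [hnn x 1, hsum x]
  have hft0 : ∀ x, 0 ≤ ft x := by
    intro x; rcases hcases x with ⟨h1, _⟩ | ⟨h1, _⟩ <;> rw [h1] <;> exact hptnonneg x _
  have hft1 : ∀ x, ft x ≤ 1 := by
    intro x; rcases hcases x with ⟨h1, _⟩ | ⟨h1, _⟩ <;> rw [h1]
    · exact hple pt hptnonneg hptsum x _ (Or.inr rfl)
    · exact hple pt hptnonneg hptsum x _ (Or.inl rfl)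
  have hfs0 : ∀ x, 0 ≤ fs x := by
    intro x; rcases hcases x with ⟨_, h1⟩ | ⟨_, h1⟩ <;> rw [h1] <;> exact hpsnonneg x _
  have hfs1 : ∀ x, fs x ≤ 1 := by
    intro x; rcases hcases x with ⟨_, h1⟩ | ⟨_, h1⟩ <;> rw [h1]
    · exact hple ps hpsnonneg hpssum x _ (Or.inr rfl)
    · exact hple ps hpsnonneg hpssum x _ (Or.inl rfl)
  have hmft : Measurable ft :=
    (((measurable_const.sub hh).abs.div_const 2).mul (hptmeas 1)).add
      (((measurable_const.sub hh).abs.div_const 2).mul (hptmeas (-1)))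
  have hmfs : Measurable fs :=
    (((measurable_const.sub hh).abs.div_const 2).mul (hpsmeas 1)).add
      (((measurable_const.sub hh).abs.div_const 2).mul (hpsmeas (-1)))
  -- integrabilities
  have hintb : ∀ (g : X → ℝ), Measurable g → (∀ x, 0 ≤ g x) → (∀ x, g x ≤ 1) →
      ∀ (μ : Measure X) [IsProbabilityMeasure μ], Integrable g μ := by
    intro g hg h0 h1 μ _
    refine Integrable.mono' (integrable_const 1) hg.aestronglyMeasurable ?_
    filter_upwards with x
    rw [Real.norm_eq_abs, abs_le]; exact ⟨by linarith [h0 x], h1 x⟩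
  have hift : ∀ (μ : Measure X) [IsProbabilityMeasure μ], Integrable ft μ :=
    hintb ft hmft hft0 hft1
  have hifs : ∀ (μ : Measure X) [IsProbabilityMeasure μ], Integrable fs μ :=
    hintb fs hmfs hfs0 hfs1
  set B : X → ℝ := fun x => |pt x 1 - ps x 1| + |pt x (-1) - ps x (-1)| with hB
  have hmB : Measurable B :=
    ((hptmeas 1).sub (hpsmeas 1)).abs.add ((hptmeas (-1)).sub (hpsmeas (-1))).abs
  have hiB : ∀ (μ : Measure X) [IsProbabilityMeasure μ], Integrable B μ := by
    intro μ _
    refine Integrable.mono' (integrable_const 2) hmB.aestronglyMeasurable ?_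
    filter_upwards with x
    have h1 : |pt x 1 - ps x 1| ≤ 1 := by
      rw [abs_le]
      constructor <;>
        linarith [hptnonneg x 1, hpsnonneg x 1,
          hple pt hptnonneg hptsum x 1 (Or.inl rfl), hple ps hpsnonneg hpssum x 1 (Or.inl rfl)]
    have h2 : |pt x (-1) - ps x (-1)| ≤ 1 := by
      rw [abs_le]
      constructor <;>
        linarith [hptnonneg x (-1), hpsnonneg x (-1),
          hple pt hptnonneg hptsum x (-1) (Or.inr rfl),
          hple ps hpsnonneg hpssum x (-1) (Or.inr rfl)]
    rw [Real.norm_eq_abs, hB]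
    have : (0:ℝ) ≤ |pt x 1 - ps x 1| + |pt x (-1) - ps x (-1)| :=
      add_nonneg (abs_nonneg _) (abs_nonneg _)
    rw [abs_of_nonneg this]; linarith
  have hdiff : ∀ x, |ft x - fs x| ≤ B x := by
    intro x
    rcases hcases x with ⟨h1, h2⟩ | ⟨h1, h2⟩ <;> rw [h1, h2, hB] <;>
      [exact le_add_of_nonneg_left (abs_nonneg _);
       exact le_add_of_nonneg_right (abs_nonneg _)]
  -- the two middle-term bounds
  have hmid : ∀ (μ : Measure X) [IsProbabilityMeasure μ],
      |∫ x, ft x ∂μ - ∫ x, fs x ∂μ| ≤ ∫ x, B x ∂μ := by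
    intro μ _
    rw [← integral_sub (hift μ) (hifs μ)]
    calc |∫ x, (ft x - fs x) ∂μ| ≤ ∫ x, |ft x - fs x| ∂μ := by
          simpa [Real.norm_eq_abs] using
            norm_integral_le_integral_norm (μ := μ) (fun x => ft x - fs x)
      _ ≤ ∫ x, B x ∂μ :=
          integral_mono ((hift μ).sub (hifs μ)).abs (hiB μ) hdiff
  have hTVt : |∫ x, ft x ∂Pt - ∫ x, ft x ∂Ps| ≤ TV Ps Pt := by
    rw [TV_symm]; exact key Pt Ps ft hmft hft0 hft1
  have hTVs : |∫ x, fs x ∂Pt - ∫ x, fs x ∂Ps| ≤ TV Ps Pt := by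
    rw [TV_symm]; exact key Pt Ps fs hmfs hfs0 hfs1
  rw [hriskT, hriskS]
  rw [← min_add_add_left]
  refine le_min ?_ ?_
  · -- via Pt : split fs side
    have := hmid Pt
    calc |∫ x, ft x ∂Pt - ∫ x, fs x ∂Ps|
        = |(∫ x, ft x ∂Pt - ∫ x, fs x ∂Pt) + (∫ x, fs x ∂Pt - ∫ x, fs x ∂Ps)| := by congr 1; ring
      _ ≤ |∫ x, ft x ∂Pt - ∫ x, fs x ∂Pt| + |∫ x, fs x ∂Pt - ∫ x, fs x ∂Ps| := abs_add_le _ _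
      _ ≤ ∫ x, B x ∂Pt + TV Ps Pt := add_le_add (hmid Pt) hTVs
      _ = TV Ps Pt + ∫ x, B x ∂Pt := add_comm _ _
  · calc |∫ x, ft x ∂Pt - ∫ x, fs x ∂Ps|
        = |(∫ x, ft x ∂Pt - ∫ x, ft x ∂Ps) + (∫ x, ft x ∂Ps - ∫ x, fs x ∂Ps)| := by congr 1; ring
      _ ≤ |∫ x, ft x ∂Pt - ∫ x, ft x ∂Ps| + |∫ x, ft x ∂Ps - ∫ x, fs x ∂Ps| := abs_add_le _ _
      _ ≤ TV Ps Pt + ∫ x, B x ∂Ps := add_le_add hTVt (hmid Ps)
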